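/- arXiv:1407.1112 — 2 statements merged into one kernel-verified Lean document; each statement's English description precedes it below -/
import Mathlib

section
/- Let X and Y be independent real random variables such that X has the Rician power density with parameters (K_x, γ̄_x) and Y has the Rician power density with parameters (K_y, γ̄_y). Then for every γ ≥ 0, the cumulative distribution function of Z = min(X, Y) satisfies P(Z ≤ γ) = 1 − A_x A_y Σ_{k=0}^∞ Σ_{n=0}^k B̃_x(n) B̃_y(k−n) Γ(n+1, a_x γ) Γ(k−n+1, a_y γ), where the double series converges. -/
open MeasureTheory Set
open scoped ProbabilityTheory

/-- The parameter `a = (1+K)/γ̄` of the Rician power (non-central chi-square) distribution. -/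
noncomputable def ra (K g : ℝ) : ℝ := (1 + K) / g

/-- The parameter `A = a·e^{-K}`. -/
noncomputable def rA (K g : ℝ) : ℝ := ra K g * Real.exp (-K)

/-- The series coefficients `B(k) = K^k a^k/(k!)²`. -/
noncomputable def rB (K g : ℝ) (k : ℕ) : ℝ := K ^ k * ra K g ^ k / ((k.factorial : ℝ)) ^ 2

/-- The normalized coefficients `B̃(k) = B(k)/a^{k+1}`. -/
noncomputable def rBt (K g : ℝ) (k : ℕ) : ℝ := rB K g k / ra K g ^ (k + 1)

/-- The upper incomplete gamma function `Γ(s, x) = ∫_x^∞ t^{s-1} e^{-t} dt`. -/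
noncomputable def uGamma (s x : ℝ) : ℝ := ∫ t in Set.Ioi x, t ^ (s - 1) * Real.exp (-t)

/-- The Rician power density `f(u) = A e^{-a u} Σ_k B(k) u^k` for `u > 0`, and `0` otherwise. -/
noncomputable def ricianDensity (K g u : ℝ) : ℝ :=
  if 0 < u then rA K g * Real.exp (-(ra K g) * u) * ∑' k : ℕ, rB K g k * u ^ k else 0

lemma ra_pos {K g : ℝ} (hK : 0 ≤ K) (hg : 0 < g) : 0 < ra K g :=
  div_pos (by linarith) hg

lemma rA_pos {K g : ℝ} (hK : 0 ≤ K) (hg : 0 < g) : 0 < rA K g :=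
  mul_pos (ra_pos hK hg) (Real.exp_pos _)

lemma rB_nonneg {K g : ℝ} (hK : 0 ≤ K) (hg : 0 < g) (k : ℕ) : 0 ≤ rB K g k :=
  div_nonneg (mul_nonneg (pow_nonneg hK k) (pow_nonneg (ra_pos hK hg).le k)) (by positivity)

lemma rBt_nonneg {K g : ℝ} (hK : 0 ≤ K) (hg : 0 < g) (k : ℕ) : 0 ≤ rBt K g k :=
  div_nonneg (rB_nonneg hK hg k) (pow_nonneg (ra_pos hK hg).le _)

lemma uGamma_nat_eq (k : ℕ) (x : ℝ) :
    uGamma (k + 1) x = ∫ t in Set.Ioi x, t ^ k * Real.exp (-t) := by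
  unfold uGamma
  refine setIntegral_congr_fun measurableSet_Ioi (fun t _ => ?_)
  rw [add_sub_cancel_right, Real.rpow_natCast]

lemma integrableOn_pow_exp (k : ℕ) {x : ℝ} (hx : 0 ≤ x) :
    IntegrableOn (fun t => t ^ k * Real.exp (-t)) (Set.Ioi x) := by
  have h0 : IntegrableOn (fun t : ℝ => Real.exp (-t) * t ^ ((k : ℝ) + 1 - 1)) (Set.Ioi 0) :=
    Real.GammaIntegral_convergent (by positivity)
  have h1 : IntegrableOn (fun t : ℝ => t ^ k * Real.exp (-t)) (Set.Ioi 0) := by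
    refine h0.congr_fun (fun t _ => ?_) measurableSet_Ioi
    rw [add_sub_cancel_right]; beta_reduce; rw [Real.rpow_natCast, mul_comm]
  exact h1.mono_set (Ioi_subset_Ioi hx)

lemma uGamma_nonneg (k : ℕ) {x : ℝ} (hx : 0 ≤ x) : 0 ≤ uGamma (k + 1) x := by
  rw [uGamma_nat_eq]
  refine setIntegral_nonneg measurableSet_Ioi (fun t ht => ?_)
  have h0 : (0:ℝ) ≤ t := hx.trans (le_of_lt ht)
  positivity

lemma integrableOn_pow_exp_mul (k : ℕ) {a : ℝ} (ha : 0 < a) {γ : ℝ} (hγ : 0 ≤ γ) :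
    IntegrableOn (fun u => u ^ k * Real.exp (-a * u)) (Set.Ioi γ) := by
  have h : IntegrableOn (fun x : ℝ => (a * x) ^ k * Real.exp (-(a * x))) (Set.Ioi γ) :=
    (integrableOn_Ioi_comp_mul_left_iff (fun t => t ^ k * Real.exp (-t)) γ ha).2
      (integrableOn_pow_exp k (mul_nonneg ha.le hγ))
  have h2 := h.const_mul ((a : ℝ) ^ k)⁻¹
  refine IntegrableOn.congr_fun h2 (fun u _ => ?_) measurableSet_Ioi
  rw [mul_pow, neg_mul]
  field_simp

lemma integral_pow_exp (k : ℕ) {a : ℝ} (ha : 0 < a) {γ : ℝ} (hγ : 0 ≤ γ) :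
    ∫ u in Set.Ioi γ, u ^ k * Real.exp (-a * u)
      = (a ^ (k + 1))⁻¹ * uGamma (k + 1) (a * γ) := by
  rw [uGamma_nat_eq]
  have h := integral_comp_mul_left_Ioi (fun t => t ^ k * Real.exp (-t)) γ ha
  simp only [smul_eq_mul] at h
  have h2 : ∫ x in Set.Ioi γ, (a * x) ^ k * Real.exp (-(a * x))
      = a ^ k * ∫ u in Set.Ioi γ, u ^ k * Real.exp (-a * u) := by
    rw [← integral_const_mul]
    refine setIntegral_congr_fun measurableSet_Ioi (fun x _ => ?_)
    rw [mul_pow, neg_mul]; ring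
  rw [h2] at h
  have hak : (a : ℝ) ^ k ≠ 0 := pow_ne_zero k ha.ne'
  field_simp at h ⊢
  rw [pow_succ]
  nlinarith [h]

lemma summable_rB {K g : ℝ} (hK : 0 ≤ K) (hg : 0 < g) {u : ℝ} (hu : 0 ≤ u) :
    Summable (fun k => rB K g k * u ^ k) := by
  have hx0 : 0 ≤ K * ra K g * u := by
    have := (ra_pos hK hg).le; positivity
  refine Summable.of_nonneg_of_le (fun k => ?_) (fun k => ?_)
    (Real.summable_pow_div_factorial (K * ra K g * u))
  · have := rB_nonneg hK hg k; positivity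
  · have h1 : rB K g k * u ^ k = (K * ra K g * u) ^ k / ((k.factorial : ℝ)) ^ 2 := by
      rw [rB]; rw [mul_pow, mul_pow]; ring
    rw [h1]
    have hf1 : (1:ℝ) ≤ (k.factorial : ℝ) := by exact_mod_cast k.factorial_pos
    have hf2 : (k.factorial : ℝ) ≤ ((k.factorial : ℝ)) ^ 2 := le_self_pow₀ hf1 (by norm_num)
    gcongr

lemma tail_repr (K g : ℝ) (hK : 0 ≤ K) (hg : 0 < g) {γ : ℝ} (hγ : 0 ≤ γ) :
    ∫⁻ u in Set.Ioi γ, ENNReal.ofReal (ricianDensity K g u)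
      = ∑' k : ℕ, ENNReal.ofReal (rA K g * (rBt K g k * uGamma (k + 1) (ra K g * γ))) := by
  have ha : 0 < ra K g := ra_pos hK hg
  have hA : 0 < rA K g := rA_pos hK hg
  have step1 : ∀ u ∈ Set.Ioi γ, ENNReal.ofReal (ricianDensity K g u)
      = ∑' k : ℕ, ENNReal.ofReal (rA K g * rB K g k * (u ^ k * Real.exp (-(ra K g) * u))) := by
    intro u hu
    have hu0 : 0 < u := lt_of_le_of_lt hγ hu
    rw [ricianDensity, if_pos hu0, mul_assoc, ← tsum_mul_left, ← tsum_mul_left,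
      ENNReal.ofReal_tsum_of_nonneg]
    · congr 1; funext k; congr 1; ring
    · intro k; have h1 := rB_nonneg hK hg k
      have h2 := (Real.exp_pos (-(ra K g) * u)).le
      positivity
    · exact ((summable_rB hK hg hu0.le).mul_left _).mul_left _
  rw [setLIntegral_congr_fun measurableSet_Ioi step1,
    lintegral_tsum (fun k => ?_)]
  · congr 1; funext k
    have hnn : (0:ℝ) ≤ rA K g * rB K g k := mul_nonneg hA.le (rB_nonneg hK hg k)
    have hint : IntegrableOn
        (fun u => rA K g * rB K g k * (u ^ k * Real.exp (-(ra K g) * u))) (Set.Ioi γ) :=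
      (integrableOn_pow_exp_mul k ha hγ).const_mul _
    rw [← ofReal_integral_eq_lintegral_ofReal hint ?_]
    · rw [integral_const_mul, integral_pow_exp k ha hγ]
      congr 1
      rw [rBt, rB]
      field_simp
    · refine (ae_restrict_iff' measurableSet_Ioi).2 (Filter.Eventually.of_forall fun u hu => ?_)
      have hu0 : (0:ℝ) < u := lt_of_le_of_lt hγ hu
      have h2 := (Real.exp_pos (-(ra K g) * u)).le
      positivity
  · refine Measurable.aemeasurable ?_
    refine Measurable.ennreal_ofReal ?_
    exact ((measurable_id.pow_const k).mul ((measurable_id.const_mul _).exp)).const_mul _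

/-- CDF of the minimum of two independent Rician power random variables. -/
theorem stmt_2 {Ω : Type*} [MeasureSpace Ω] [IsProbabilityMeasure (ℙ : Measure Ω)]
    (Kx gx Ky gy : ℝ) (hKx : 0 ≤ Kx) (hgx : 0 < gx) (hKy : 0 ≤ Ky) (hgy : 0 < gy)
    (X Y : Ω → ℝ) (hXm : Measurable X) (hYm : Measurable Y)
    (hXY : ProbabilityTheory.IndepFun X Y ℙ)
    (hX : Measure.map X ℙ = volume.withDensity fun u => ENNReal.ofReal (ricianDensity Kx gx u))
    (hY : Measure.map Y ℙ = volume.withDensity fun u => ENNReal.ofReal (ricianDensity Ky gy u))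
    (γ : ℝ) (hγ : 0 ≤ γ) :
    Summable (fun k : ℕ => ∑ n ∈ Finset.range (k + 1),
      rBt Kx gx n * rBt Ky gy (k - n) * uGamma (n + 1) (ra Kx gx * γ) *
        uGamma ((k - n : ℕ) + 1) (ra Ky gy * γ)) ∧
    (ℙ {ω | min (X ω) (Y ω) ≤ γ}).toReal
      = 1 - rA Kx gx * rA Ky gy * ∑' k : ℕ, ∑ n ∈ Finset.range (k + 1),
          rBt Kx gx n * rBt Ky gy (k - n) * uGamma (n + 1) (ra Kx gx * γ) *
            uGamma ((k - n : ℕ) + 1) (ra Ky gy * γ) := by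
  set cx : ℕ → ℝ := fun n => rA Kx gx * (rBt Kx gx n * uGamma (n + 1) (ra Kx gx * γ)) with hcx
  set cy : ℕ → ℝ := fun n => rA Ky gy * (rBt Ky gy n * uGamma (n + 1) (ra Ky gy * γ)) with hcy
  have hcx0 : ∀ n, 0 ≤ cx n := fun n => mul_nonneg (rA_pos hKx hgx).le
    (mul_nonneg (rBt_nonneg hKx hgx n) (uGamma_nonneg n (mul_nonneg (ra_pos hKx hgx).le hγ)))
  have hcy0 : ∀ n, 0 ≤ cy n := fun n => mul_nonneg (rA_pos hKy hgy).le
    (mul_nonneg (rBt_nonneg hKy hgy n) (uGamma_nonneg n (mul_nonneg (ra_pos hKy hgy).le hγ)))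
  -- tail probabilities
  have hPX : ℙ (X ⁻¹' Set.Ioi γ) = ∑' k, ENNReal.ofReal (cx k) := by
    rw [← Measure.map_apply hXm measurableSet_Ioi, hX, withDensity_apply _ measurableSet_Ioi,
      tail_repr Kx gx hKx hgx hγ]
  have hPY : ℙ (Y ⁻¹' Set.Ioi γ) = ∑' k, ENNReal.ofReal (cy k) := by
    rw [← Measure.map_apply hYm measurableSet_Ioi, hY, withDensity_apply _ measurableSet_Ioi,
      tail_repr Ky gy hKy hgy hγ]
  have hSx : Summable cx := by
    have h1 : (∑' k, ENNReal.ofReal (cx k)) ≠ ⊤ := hPX ▸ measure_ne_top ℙ _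
    refine (ENNReal.summable_toReal h1).congr (fun k => ENNReal.toReal_ofReal (hcx0 k))
  have hSy : Summable cy := by
    have h1 : (∑' k, ENNReal.ofReal (cy k)) ≠ ⊤ := hPY ▸ measure_ne_top ℙ _
    refine (ENNReal.summable_toReal h1).congr (fun k => ENNReal.toReal_ofReal (hcy0 k))
  have hPXr : (ℙ (X ⁻¹' Set.Ioi γ)).toReal = ∑' k, cx k := by
    rw [hPX, ← ENNReal.ofReal_tsum_of_nonneg hcx0 hSx,
      ENNReal.toReal_ofReal (tsum_nonneg hcx0)]
  have hPYr : (ℙ (Y ⁻¹' Set.Ioi γ)).toReal = ∑' k, cy k := by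
    rw [hPY, ← ENNReal.ofReal_tsum_of_nonneg hcy0 hSy,
      ENNReal.toReal_ofReal (tsum_nonneg hcy0)]
  -- Cauchy product
  have habs_x : Summable (fun n => ‖cx n‖) := by
    refine hSx.congr (fun n => ?_)
    rw [Real.norm_eq_abs, abs_of_nonneg (hcx0 n)]
  have habs_y : Summable (fun n => ‖cy n‖) := by
    refine hSy.congr (fun n => ?_)
    rw [Real.norm_eq_abs, abs_of_nonneg (hcy0 n)]
  have hprod : Summable (fun k => ∑ n ∈ Finset.range (k + 1), cx n * cy (k - n)) :=
    (summable_norm_sum_mul_range_of_summable_norm habs_x habs_y).of_norm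
  have hprodeq : (∑' n, cx n) * (∑' n, cy n)
      = ∑' k, ∑ n ∈ Finset.range (k + 1), cx n * cy (k - n) :=
    tsum_mul_tsum_eq_tsum_sum_range_of_summable_norm habs_x habs_y
  have hAA : (0:ℝ) < rA Kx gx * rA Ky gy := mul_pos (rA_pos hKx hgx) (rA_pos hKy hgy)
  have hterm : ∀ k, ∑ n ∈ Finset.range (k + 1), cx n * cy (k - n)
      = rA Kx gx * rA Ky gy * ∑ n ∈ Finset.range (k + 1),
          rBt Kx gx n * rBt Ky gy (k - n) * uGamma (n + 1) (ra Kx gx * γ) *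
            uGamma ((k - n : ℕ) + 1) (ra Ky gy * γ) := by
    intro k
    rw [Finset.mul_sum]
    refine Finset.sum_congr rfl (fun n _ => ?_)
    simp only [hcx, hcy]
    ring
  have hsumT : Summable (fun k : ℕ => ∑ n ∈ Finset.range (k + 1),
      rBt Kx gx n * rBt Ky gy (k - n) * uGamma (n + 1) (ra Kx gx * γ) *
        uGamma ((k - n : ℕ) + 1) (ra Ky gy * γ)) := by
    refine (hprod.mul_left (rA Kx gx * rA Ky gy)⁻¹).congr (fun k => ?_)
    rw [hterm k, ← mul_assoc, inv_mul_cancel₀ hAA.ne', one_mul]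
  refine ⟨hsumT, ?_⟩
  -- event decomposition
  have hset : {ω | min (X ω) (Y ω) ≤ γ} = (X ⁻¹' Set.Ioi γ ∩ Y ⁻¹' Set.Ioi γ)ᶜ := by
    ext ω
    simp only [Set.mem_setOf_eq, Set.mem_compl_iff, Set.mem_inter_iff, Set.mem_preimage,
      Set.mem_Ioi, min_le_iff, not_and_or, not_lt]
  have hmeas : MeasurableSet (X ⁻¹' Set.Ioi γ ∩ Y ⁻¹' Set.Ioi γ) :=
    (hXm measurableSet_Ioi).inter (hYm measurableSet_Ioi)
  have hindep : ℙ (X ⁻¹' Set.Ioi γ ∩ Y ⁻¹' Set.Ioi γ)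
      = ℙ (X ⁻¹' Set.Ioi γ) * ℙ (Y ⁻¹' Set.Ioi γ) :=
    hXY.measure_inter_preimage_eq_mul _ _ measurableSet_Ioi measurableSet_Ioi
  have hle : ℙ (X ⁻¹' Set.Ioi γ) * ℙ (Y ⁻¹' Set.Ioi γ) ≤ 1 :=
    mul_le_one' prob_le_one prob_le_one
  rw [hset, prob_compl_eq_one_sub hmeas, hindep,
    ENNReal.toReal_sub_of_le hle ENNReal.one_ne_top, ENNReal.toReal_one,
    ENNReal.toReal_mul, hPXr, hPYr, hprodeq]
  rw [tsum_congr hterm, tsum_mul_left]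
end

section
/- Let f : ℝ → ℝ be a nonnegative measurable function supported on (0, ∞) with ∫_0^∞ f(γ) dγ ≤ 1, and suppose γ₀ > 0 satisfies ∫_{γ₀}^∞ (1/γ₀ − 1/γ) f(γ) dγ = 1 (with the integral converging). Then 0 < γ₀ ≤ 1. -/
open MeasureTheory Set

/-- the optimal cutoff SNR `γ₀` of the optimal power and rate adaptation
scheme satisfies `0 < γ₀ ≤ 1`. -/
theorem stmt_10 (f : ℝ → ℝ) (hmeas : Measurable f) (hpos : ∀ x, 0 ≤ f x)
    (hsupp : ∀ x ≤ 0, f x = 0) (hint : IntegrableOn f (Set.Ioi 0))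
    (hle : (∫ x in Set.Ioi (0 : ℝ), f x) ≤ 1)
    (γ₀ : ℝ) (hγ₀ : 0 < γ₀)
    (hint2 : IntegrableOn (fun γ => (1 / γ₀ - 1 / γ) * f γ) (Set.Ioi γ₀))
    (heq : (∫ γ in Set.Ioi γ₀, (1 / γ₀ - 1 / γ) * f γ) = 1) :
    0 < γ₀ ∧ γ₀ ≤ 1 := by
  refine ⟨hγ₀, ?_⟩
  have hsub : Set.Ioi γ₀ ⊆ Set.Ioi (0:ℝ) := fun x hx => lt_trans hγ₀ hx
  have hintf : IntegrableOn f (Set.Ioi γ₀) := hint.mono_set hsub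
  have h1 : (∫ γ in Set.Ioi γ₀, (1 / γ₀ - 1 / γ) * f γ) ≤
      ∫ γ in Set.Ioi γ₀, (1 / γ₀) * f γ := by
    refine setIntegral_mono_on hint2 (hintf.const_mul _) measurableSet_Ioi ?_
    intro x hx
    have hx0 : 0 < x := lt_trans hγ₀ hx
    have : (1 / γ₀ - 1 / x) ≤ 1 / γ₀ := by
      have : 0 ≤ 1 / x := by positivity
      linarith
    exact mul_le_mul_of_nonneg_right this (hpos x)
  have h2 : (∫ γ in Set.Ioi γ₀, (1 / γ₀) * f γ) = (1 / γ₀) * ∫ γ in Set.Ioi γ₀, f γ :=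
    integral_const_mul _ _
  have h3 : (∫ γ in Set.Ioi γ₀, f γ) ≤ ∫ γ in Set.Ioi (0:ℝ), f γ := by
    refine setIntegral_mono_set hint ?_ (HasSubset.Subset.eventuallyLE hsub)
    exact Filter.Eventually.of_forall fun x => hpos x
  have hf0 : 0 ≤ ∫ γ in Set.Ioi γ₀, f γ :=
    setIntegral_nonneg measurableSet_Ioi fun x _ => hpos x
  have : (1:ℝ) ≤ (1 / γ₀) * 1 := by
    calc (1:ℝ) = ∫ γ in Set.Ioi γ₀, (1 / γ₀ - 1 / γ) * f γ := heq.symm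
      _ ≤ (1 / γ₀) * ∫ γ in Set.Ioi γ₀, f γ := h1.trans h2.le
      _ ≤ (1 / γ₀) * 1 := by
          apply mul_le_mul_of_nonneg_left (h3.trans hle)
          positivity
  have h4 : (1:ℝ) ≤ γ₀⁻¹ := by simpa using this
  have := (one_le_inv_iff₀.mp h4).2
  linarith
end
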